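/- Let M(t) = Σ_{ν≥1} (1/(16c)) (ct)^ν/ν² be a formal power series with positive constant c. Then coefficientwise, M(t)² is dominated by (1/c)·M(t), i.e., every coefficient of M(t)² is at most the corresponding coefficient of (1/c)·M(t). -/

import Mathlib

/-- The coefficients of the power series `M(t) = Σ_{ν≥1} (1/(16c)) (ct)^ν / ν²`. -/
noncomputable def Mcoef (c : ℝ) (ν : ℕ) : ℝ :=
  if ν = 0 then 0 else (1 / (16 * c)) * c ^ ν / (ν : ℝ) ^ 2

/-!
Write `M_ν = c^ν/(16c) · ν⁻²`. For `i + j = k` we have `1/(i²j²) = (1/i + 1/j)²/k² ≤ 2(1/i² + 1/j²)/k²`,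
so with `Σ 1/i² ≤ 2` the convolution `Σ_{i+j=k} 1/(i²j²)` is at most `8/k²`. Hence the `k`-th
coefficient of `M²` is at most `c^k/(16c)² · 8/k²`, which the factor `1/16` makes smaller than
`c^k/(16c²) · 1/k² = M_k / c`.
-/

open Finset

-- The junk value `(0 ^ 2)⁻¹ = 0` makes this formula valid at `ν = 0` as well.
lemma Mcoef_eq (c : ℝ) (ν : ℕ) : Mcoef c ν = c ^ ν / (16 * c) * ((ν : ℝ) ^ 2)⁻¹ := by
  rcases eq_or_ne ν 0 with rfl | hν
  · simp [Mcoef]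
  · simp only [Mcoef, if_neg hν]
    ring

lemma inv_sq_mul_inv_sq_le {x y : ℝ} (hx : 0 ≤ x) (hy : 0 ≤ y) :
    (x ^ 2)⁻¹ * (y ^ 2)⁻¹ ≤ 2 / (x + y) ^ 2 * ((x ^ 2)⁻¹ + (y ^ 2)⁻¹) := by
  rcases hx.eq_or_lt with rfl | hx
  · rw [zero_pow two_ne_zero, inv_zero, zero_mul]
    positivity
  rcases hy.eq_or_lt with rfl | hy
  · rw [zero_pow two_ne_zero, inv_zero, mul_zero]
    positivity
  rw [div_mul_eq_mul_div, le_div_iff₀ (by positivity)]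
  field_simp
  nlinarith [sq_nonneg (x - y), mul_pos hx hy]

lemma sum_range_inv_sq_le_two (n : ℕ) : ∑ i ∈ range n, ((i : ℝ) ^ 2)⁻¹ ≤ 2 := by
  rcases n.eq_zero_or_pos with rfl | hn
  · simp
  rw [range_eq_Ico, ← Ioo_insert_left hn, sum_insert left_notMem_Ioo]
  simpa using sum_Ioo_inv_sq_le (α := ℝ) 0 n

lemma sum_antidiagonal_inv_sq_mul_inv_sq_le (k : ℕ) :
    ∑ p ∈ antidiagonal k, ((p.1 : ℝ) ^ 2)⁻¹ * ((p.2 : ℝ) ^ 2)⁻¹ ≤ 8 / (k : ℝ) ^ 2 := by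
  have hsym : ∑ p ∈ antidiagonal k, ((p.2 : ℝ) ^ 2)⁻¹ = ∑ p ∈ antidiagonal k, ((p.1 : ℝ) ^ 2)⁻¹ :=
    Nat.sum_antidiagonal_swap (f := fun p => ((p.1 : ℝ) ^ 2)⁻¹)
  have hrange : ∑ p ∈ antidiagonal k, ((p.1 : ℝ) ^ 2)⁻¹ = ∑ i ∈ range (k + 1), ((i : ℝ) ^ 2)⁻¹ :=
    Nat.sum_antidiagonal_eq_sum_range_succ (fun i _ => ((i : ℝ) ^ 2)⁻¹) k
  calc ∑ p ∈ antidiagonal k, ((p.1 : ℝ) ^ 2)⁻¹ * ((p.2 : ℝ) ^ 2)⁻¹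
      ≤ ∑ p ∈ antidiagonal k, 2 / (k : ℝ) ^ 2 * (((p.1 : ℝ) ^ 2)⁻¹ + ((p.2 : ℝ) ^ 2)⁻¹) := by
        refine sum_le_sum fun p hp => ?_
        have hk : (p.1 : ℝ) + p.2 = k := by exact_mod_cast mem_antidiagonal.mp hp
        exact hk ▸ inv_sq_mul_inv_sq_le p.1.cast_nonneg p.2.cast_nonneg
    _ = 2 / (k : ℝ) ^ 2 * (2 * ∑ i ∈ range (k + 1), ((i : ℝ) ^ 2)⁻¹) := by
        rw [← mul_sum, sum_add_distrib, hsym, hrange, two_mul]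
    _ ≤ 2 / (k : ℝ) ^ 2 * (2 * 2) := by
        gcongr
        exact sum_range_inv_sq_le_two _
    _ = 8 / (k : ℝ) ^ 2 := by ring

/-- Coefficientwise, `M(t)²` is dominated by `(1/c)·M(t)`: every coefficient of `M(t)²`
(the `k`-th coefficient being the convolution `Σ_{i+j=k} M_i M_j`) is at most the
corresponding coefficient of `(1/c)·M(t)`. -/
theorem Msq_dominated (c : ℝ) (hc : 0 < c) (k : ℕ) :
    (∑ p ∈ Finset.HasAntidiagonal.antidiagonal k, Mcoef c p.1 * Mcoef c p.2) ≤ (1 / c) * Mcoef c k := by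
  have hconv : ∑ p ∈ antidiagonal k, Mcoef c p.1 * Mcoef c p.2
      = c ^ k / (16 * c) ^ 2 * ∑ p ∈ antidiagonal k, ((p.1 : ℝ) ^ 2)⁻¹ * ((p.2 : ℝ) ^ 2)⁻¹ := by
    rw [mul_sum]
    refine sum_congr rfl fun p hp => ?_
    rw [Mcoef_eq, Mcoef_eq, ← mem_antidiagonal.mp hp, pow_add]
    ring
  calc ∑ p ∈ antidiagonal k, Mcoef c p.1 * Mcoef c p.2
      ≤ c ^ k / (16 * c) ^ 2 * (8 / (k : ℝ) ^ 2) := by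
        rw [hconv]
        gcongr
        exact sum_antidiagonal_inv_sq_mul_inv_sq_le k
    _ ≤ 1 / c * Mcoef c k := by
        rw [Mcoef_eq, div_eq_mul_inv 8]
        field_simp
        gcongr
        norm_num
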